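/- In the causal model with binary endogenous variables A, C, D, E, equations E = (C ∧ D) ∨ A and A = ¬D, and a context u in which D=0 and C=1 (so that A=1 and E=1), it holds that C=1 is not a NESS-cause of E=1 w.r.t. (M,u). -/

import Mathlib

/-!
Structural equation models (causal models) à la Pearl/Halpern, formalizing
Beckers' "The Counterfactual NESS Definition of Causation".

A causal model over a context type `Ctx` (settings of the exogenous variables),
endogenous variables `V` and values `Val` consists of finite nonempty ranges
`R X`, structural equations `F X`, and a strong-recursiveness (acyclicity)
witness: an order `ord` such that `F X` only depends on variables of lower order.
-/

structure CausalModel (Ctx V Val : Type) where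
  R : V → Finset Val
  R_nonempty : ∀ X, (R X).Nonempty
  F : V → Ctx → (V → Val) → Val
  ord : V → ℕ
  F_resp : ∀ X u s s', (∀ Y, ord Y < ord X → s Y = s' Y) → F X u s = F X u s'

namespace CausalModel

variable {Ctx V Val : Type}

/-- The unique solution of the equations in context `u` (it exists and is
unique by strong recursiveness). `(M,u) ⊨ X = x` iff `M.sol u X = x`. -/
noncomputable def sol (M : CausalModel Ctx V Val) (u : Ctx) : V → Val :=
  fun X =>
    M.F X u (fun Y => if h : M.ord Y < M.ord X then M.sol u Y else (M.R_nonempty Y).choose)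
termination_by X => M.ord X
decreasing_by exact h

/-- `M.sol u` indeed solves all the equations. -/
theorem sol_eq (M : CausalModel Ctx V Val) (u : Ctx) (X : V) :
    M.sol u X = M.F X u (M.sol u) := by
  rw [sol]
  exact M.F_resp X u _ _ (fun Y hY => dif_pos hY)

variable [DecidableEq V]

/-- `X⃗ = x⃗` (given by the set `Xs` and the assignment `xs`) is sufficient for
`E = e` w.r.t. `(M, u)`: the equation for `E` outputs `e` on every setting of the
endogenous variables (in their ranges) that agrees with `xs` on `Xs`. -/
def Sufficient (M : CausalModel Ctx V Val) (u : Ctx) (Xs : Finset V) (xs : V → Val)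
    (E : V) (e : Val) : Prop :=
  ∀ s : V → Val, (∀ Y, s Y ∈ M.R Y) → (∀ X ∈ Xs, s X = xs X) → M.F E u s = e

/-- The intervened model `M_{X⃗ ← x⃗}`: the equations of variables in `Xs` are
replaced by the constants given by `xs`. -/
def intervene (M : CausalModel Ctx V Val) (Xs : Finset V) (xs : V → Val) :
    CausalModel Ctx V Val where
  R := M.R
  R_nonempty := M.R_nonempty
  F := fun X u s => if X ∈ Xs then xs X else M.F X u s
  ord := M.ord
  F_resp := by
    intro X u s s' h
    by_cases hX : X ∈ Xs
    · simp [hX]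
    · simpa [hX] using M.F_resp X u s s' h

/-- `W⃗ = w⃗` (given by `Ws, ws`) is a witness for `C = c` directly NESS-causing
`E = e` w.r.t. `(M, u)`: `C = c` and `W⃗ = w⃗` actually hold, `{C = c} ∪ {W⃗ = w⃗}`
is sufficient for `E = e`, and `W⃗ = w⃗` alone is not. -/
def DirectNESSWith (M : CausalModel Ctx V Val) (u : Ctx) (C : V) (c : Val) (E : V) (e : Val)
    (Ws : Finset V) (ws : V → Val) : Prop :=
  M.sol u C = c ∧ (∀ W ∈ Ws, M.sol u W = ws W) ∧
  M.Sufficient u (insert C Ws) (Function.update ws C c) E e ∧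
  ¬ M.Sufficient u Ws ws E e

/-- `C = c` directly NESS-causes `E = e` w.r.t. `(M, u)`. -/
def DirectNESS (M : CausalModel Ctx V Val) (u : Ctx) (C : V) (c : Val) (E : V) (e : Val) :
    Prop :=
  ∃ (Ws : Finset V) (ws : V → Val), M.DirectNESSWith u C c E e Ws ws

/-- `C = c` NESS-causes `E = e` along the path `p = (C₁, …, Cₙ)` w.r.t. `(M, u)`:
there are values `c₁, …, cₙ` such that `C = c` directly NESS-causes `C₁ = c₁`, …,
and `Cₙ = cₙ` directly NESS-causes `E = e`. (A direct NESS-cause is a NESS-cause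
along the empty path.) -/
def NESSAlong (M : CausalModel Ctx V Val) (u : Ctx) (C : V) (c : Val) (p : List V)
    (E : V) (e : Val) : Prop :=
  ∃ cs : List Val, cs.length = p.length ∧
    List.Chain (fun a b => M.DirectNESS u a.1 a.2 b.1 b.2) (C, c) (p.zip cs ++ [(E, e)])

/-- `C = c` NESS-causes `E = e` w.r.t. `(M, u)`: there is a chain of direct
NESS-causes from `C = c` to `E = e`. -/
def NESS (M : CausalModel Ctx V Val) (u : Ctx) (C : V) (c : Val) (E : V) (e : Val) : Prop :=
  ∃ p : List V, M.NESSAlong u C c p E e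

/-- The BV definition: `C = c` NESS-causes `E = e` w.r.t. `(M, u)` and there is a
`c' ∈ R(C)` such that `C = c'` does not NESS-cause `E = e` w.r.t. `(M_{C ← c'}, u)`. -/
def BVCause (M : CausalModel Ctx V Val) (u : Ctx) (C : V) (c : Val) (E : V) (e : Val) :
    Prop :=
  M.NESS u C c E e ∧
    ∃ c' ∈ M.R C, ¬ (M.intervene {C} (fun _ => c')).NESS u C c' E e

/-- The CNESS definition: `C = c` NESS-causes `E = e` along some path `p` w.r.t.
`(M, u)` and there is a `c' ∈ R(C)` such that `C = c'` does not NESS-cause `E = e`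
along any subpath of `p` (a path all of whose variables are in `p`) w.r.t.
`(M_{C ← c'}, u)`. -/
def CNESSCause (M : CausalModel Ctx V Val) (u : Ctx) (C : V) (c : Val) (E : V) (e : Val) :
    Prop :=
  ∃ p : List V, M.NESSAlong u C c p E e ∧
    ∃ c' ∈ M.R C, ∀ p' : List V, (∀ X ∈ p', X ∈ p) →
      ¬ (M.intervene {C} (fun _ => c')).NESSAlong u C c' p' E e

/-- `E = e` is counterfactually dependent on `C = c` w.r.t. `(M, u)`:
`(M,u) ⊨ C = c ∧ E = e` and there is a `c' ∈ R(C)` with `(M,u) ⊨ [C ← c'] ¬(E = e)`. -/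
def CfDep (M : CausalModel Ctx V Val) (u : Ctx) (C : V) (c : Val) (E : V) (e : Val) : Prop :=
  M.sol u C = c ∧ M.sol u E = e ∧
    ∃ c' ∈ M.R C, (M.intervene {C} (fun _ => c')).sol u E ≠ e

/-- `E = e` is counterfactually dependent on `C = c` given the intervention
`X⃗ ← x⃗`: in `M_{X⃗ ← x⃗}` with context `u`, `C = c` and `E = e` hold, and there is
a `c' ∈ R(C)` such that additionally intervening with `C ← c'` makes `E = e` false. -/
def CfDepGiven (M : CausalModel Ctx V Val) (u : Ctx) (Xs : Finset V) (xs : V → Val)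
    (C : V) (c : Val) (E : V) (e : Val) : Prop :=
  (M.intervene Xs xs).sol u C = c ∧ (M.intervene Xs xs).sol u E = e ∧
    ∃ c' ∈ M.R C, ((M.intervene Xs xs).intervene {C} (fun _ => c')).sol u E ≠ e

/-- `Y` is a parent of `X`: the equation `F X` varies with the value of `Y`
for some context and some setting (within the ranges) of the other variables. -/
def Parent (M : CausalModel Ctx V Val) (Y X : V) : Prop :=
  ∃ (u : Ctx) (s : V → Val) (y y' : Val),
    (∀ Z, s Z ∈ M.R Z) ∧ y ∈ M.R Y ∧ y' ∈ M.R Y ∧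
    M.F X u (Function.update s Y y) ≠ M.F X u (Function.update s Y y')

end CausalModel
/-- Variables for the model with equations `E = (C ∧ D) ∨ A`, `A = ¬D`. -/
inductive V4 | A | C | D | E
deriving DecidableEq

/-- The model with equations `E = (C ∧ D) ∨ A` and `A = ¬D`,
in a context where `D = 0` and `C = 1`. -/
def M4 : CausalModel Unit V4 Bool where
  R := fun _ => Finset.univ
  R_nonempty := fun _ => Finset.univ_nonempty
  F := fun X _ s =>
    match X with
    | .A => !(s .D)
    | .C => true
    | .D => false
    | .E => (s .C && s .D) || s .A
  ord := fun X => match X with | .D => 0 | .C => 0 | .A => 1 | .E => 2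
  F_resp := by
    intro X u s s' h
    cases X
    · show (!(s V4.D)) = (!(s' V4.D))
      rw [h V4.D (by decide)]
    · rfl
    · rfl
    · show ((s V4.C && s V4.D) || s V4.A) = ((s' V4.C && s' V4.D) || s' V4.A)
      rw [h V4.C (by decide), h V4.D (by decide), h V4.A (by decide)]


/-!
A NESS chain starting at `C = 1` begins with a direct NESS-cause of `C = 1`. The equations of
`A`, `C`, `D` ignore `C`, and in the equation of `E` the conjunct `C ∧ D` is already decided by
the actual value `D = 0`, so in no case does adding `C = 1` to a witness make it sufficient.
-/

namespace CausalModel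

variable {Ctx V Val : Type} [DecidableEq V]

theorem sufficient_of_sufficient_insert {M : CausalModel Ctx V Val} {u : Ctx} {C E : V}
    {c e : Val} {Ws : Finset V} {ws : V → Val}
    (hredundant : ∀ s : V → Val, (∀ Y, s Y ∈ M.R Y) → (∀ W ∈ Ws, s W = ws W) →
      ∃ t : V → Val, (∀ Y, t Y ∈ M.R Y) ∧
        (∀ W ∈ insert C Ws, t W = Function.update ws C c W) ∧ M.F E u t = M.F E u s)
    (hsuff : M.Sufficient u (insert C Ws) (Function.update ws C c) E e) :
    M.Sufficient u Ws ws E e := by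
  intro s hs hagree
  obtain ⟨t, ht, htagree, hF⟩ := hredundant s hs hagree
  rw [← hF]
  exact hsuff t ht htagree

theorem not_directNESS_of_not_parent {M : CausalModel Ctx V Val} {u : Ctx} {C E : V}
    {c e : Val} (hparent : ¬ M.Parent C E) (hc : c ∈ M.R C) : ¬ M.DirectNESS u C c E e := by
  rintro ⟨Ws, ws, -, -, hsuff, hnsuff⟩
  refine hnsuff (sufficient_of_sufficient_insert (fun s hs hagree => ?_) hsuff)
  refine ⟨Function.update s C c, ?_, ?_, ?_⟩
  · intro Y
    by_cases hY : Y = C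
    · subst hY; simpa using hc
    · simpa [hY] using hs Y
  · intro W hW
    by_cases hWC : W = C
    · subst hWC; simp
    · simpa [hWC] using hagree W ((Finset.mem_insert.mp hW).resolve_left hWC)
  · by_contra hne
    exact hparent ⟨u, s, c, s C, hs, hc, hs C, by simpa using hne⟩

theorem NESSAlong.exists_directNESS {M : CausalModel Ctx V Val} {u : Ctx} {C E : V}
    {c e : Val} {p : List V} (h : M.NESSAlong u C c p E e) :
    ∃ X x, M.DirectNESS u C c X x := by
  obtain ⟨cs, -, hchain⟩ := h
  obtain ⟨⟨X, x⟩, l, hl⟩ := List.exists_cons_of_ne_nil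
    (List.append_ne_nil_of_right_ne_nil (p.zip cs) (List.cons_ne_nil (E, e) []))
  rw [List.Chain, hl] at hchain
  exact ⟨X, x, List.rel_of_isChain_cons_cons hchain⟩

theorem not_NESS_of_forall_not_directNESS {M : CausalModel Ctx V Val} {u : Ctx} {C E : V}
    {c e : Val} (h : ∀ X x, ¬ M.DirectNESS u C c X x) : ¬ M.NESS u C c E e := by
  rintro ⟨p, hp⟩
  obtain ⟨X, x, hX⟩ := hp.exists_directNESS
  exact h X x hX

end CausalModel

namespace M4

theorem sol_D : M4.sol () .D = false := by
  rw [CausalModel.sol_eq]; rfl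

theorem sol_C : M4.sol () .C = true := by
  rw [CausalModel.sol_eq]; rfl

theorem sol_A : M4.sol () .A = true := by
  rw [CausalModel.sol_eq]
  show (!(M4.sol () .D)) = true
  rw [sol_D]; rfl

theorem sol_E : M4.sol () .E = true := by
  rw [CausalModel.sol_eq]
  show ((M4.sol () .C && M4.sol () .D) || M4.sol () .A) = true
  rw [sol_D, sol_C, sol_A]; rfl

theorem not_parent_C {X : V4} (hX : X ≠ .E) : ¬ M4.Parent .C X := by
  rintro ⟨u, s, y, y', -, -, -, hne⟩
  cases X <;> simp_all [M4]

/-- Since `D = 0` actually holds, a witness fixing `D` fixes it to `0`; so setting `C = 1`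
and replacing `D` by the value of `C ∧ D` leaves `E = (C ∧ D) ∨ A` unchanged. -/
theorem not_directNESS_C_E {e : Bool} : ¬ M4.DirectNESS () .C true .E e := by
  rintro ⟨Ws, ws, -, hWs, hsuff, hnsuff⟩
  refine hnsuff (CausalModel.sufficient_of_sufficient_insert (fun s _ hagree => ?_) hsuff)
  have hD : V4.D ∈ Ws → s .D = false := fun hD => by rw [hagree _ hD, ← hWs _ hD, sol_D]
  refine ⟨Function.update (Function.update s .C true) .D (s .C && s .D),
    fun _ => Finset.mem_univ _, fun W hW => ?_, ?_⟩
  · rcases Finset.mem_insert.mp hW with rfl | hW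
    · simp
    · cases W <;> simp_all
  · show ((_ && _) || _) = ((_ && _) || _)
    simp

theorem not_directNESS_C (X : V4) (x : Bool) : ¬ M4.DirectNESS () .C true X x := by
  by_cases hX : X = .E
  · subst hX; exact not_directNESS_C_E
  · exact CausalModel.not_directNESS_of_not_parent (not_parent_C hX) (Finset.mem_univ _)

end M4

/-- In the model with equations `E = (C ∧ D) ∨ A`, `A = ¬D` and a
context with `D = 0` and `C = 1` (so `A = 1` and `E = 1`), `C = 1` is not a
NESS-cause of `E = 1` w.r.t. `(M, u)`. -/
theorem c_not_ness_cause :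
    M4.sol () V4.A = true ∧ M4.sol () V4.E = true ∧
      ¬ M4.NESS () V4.C true V4.E true :=
  ⟨M4.sol_A, M4.sol_E, CausalModel.not_NESS_of_forall_not_directNESS M4.not_directNESS_C⟩
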